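/- arXiv:2305.12643 — 4 statements merged into one kernel-verified Lean document; each statement's English description precedes it below -/
import Mathlib

section
/- Under the TWHM model with parameter θ = (β_{1,0},…,β_{p,0},β_{1,1},…,β_{p,1}), define the degree of node i at time t as d_i^t = Σ_{k≠i} X^t_{i,k} (with X^t_{k,i} = X^t_{i,k} for k < i). Then for every i = 1,…,p and all times t, s ∈ {0,1,…,n}: E(d_i^t) = Σ_{k≠i} e^{β_{i,0}+β_{k,0}}/(1 + e^{β_{i,0}+β_{k,0}}); Var(d_i^t) = Σ_{k≠i} e^{β_{i,0}+β_{k,0}}/(1 + e^{β_{i,0}+β_{k,0}})²; and Corr(d_i^t, d_i^s) = C_{i,ρ} · Σ_{k≠i} ( e^{β_{i,1}+β_{k,1}}/(1 + e^{β_{i,0}+β_{k,0}} + e^{β_{i,1}+β_{k,1}}) )^{|t−s|} · e^{β_{i,0}+β_{k,0}}/(1 + e^{β_{i,0}+β_{k,0}})², where C_{i,ρ} = ( Σ_{k≠i} e^{β_{i,0}+β_{k,0}}/(1 + e^{β_{i,0}+β_{k,0}})² )^{−1} and Corr denotes the Pearson correlation Cov(d_i^t, d_i^s)/√(Var(d_i^t)·Var(d_i^s)).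 -/
/-!
Each edge process `t ↦ X^t_{ij}` is a two-state Markov chain that moves to `1` with probability
`a` from `0` and `b` from `1`, whatever the earlier past. Its initial probability
`π = e^{β_{i,0}+β_{j,0}} / (1 + e^{β_{i,0}+β_{j,0}})` solves `π = a + (b - a) π`, so the chain is
stationary, and conditioning on the path up to time `s + d` gives
`P(X^{s+d} = 1, X^s = 1) = π² + (b - a)^d π (1 - π)`, where
`b - a = e^{β_{i,1}+β_{j,1}} / (1 + e^{β_{i,0}+β_{j,0}} + e^{β_{i,1}+β_{j,1}})`.
Distinct edges are independent, so the covariance of two degrees of node `i` is the sum of the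
autocovariances of its edges.
-/

open MeasureTheory ProbabilityTheory Real Finset

/-- The Two-Way Heterogeneity Model (TWHM): `X t i j` (for `i < j`) are `{0,1}`-valued
random variables; the processes over distinct pairs are independent; the initial
distribution and the Markov transition probabilities are as prescribed by the
parameter `β` (where `β i 0 = β_{i,0}` and `β i 1 = β_{i,1}`). -/
structure TWHM (n p : ℕ) (Ω : Type) [MeasurableSpace Ω] (μ : Measure Ω)
    (β : Fin p → Fin 2 → ℝ) (X : ℕ → Fin p → Fin p → Ω → ℝ) : Prop where
  isProb : IsProbabilityMeasure μ
  meas : ∀ t (i j : Fin p), Measurable (X t i j)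
  binary : ∀ t (i j : Fin p), i < j → ∀ ω, X t i j ω = 0 ∨ X t i j ω = 1
  indep : iIndepFun (m := fun _ : {q : Fin p × Fin p // q.1 < q.2} =>
      (inferInstance : MeasurableSpace (Fin (n + 1) → ℝ)))
      (fun q ω => fun t : Fin (n + 1) => X t q.1.1 q.1.2 ω) μ
  init : ∀ (i j : Fin p), i < j →
    (μ {ω | X 0 i j ω = 1}).toReal =
      exp (β i 0 + β j 0) / (1 + exp (β i 0 + β j 0))
  markov_zero : ∀ (i j : Fin p), i < j → ∀ t : ℕ, 1 ≤ t → t ≤ n → ∀ x : ℕ → ℝ,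
    (∀ s, s < t → x s = 0 ∨ x s = 1) → x (t - 1) = 0 →
    0 < μ {ω | ∀ s, s < t → X s i j ω = x s} →
    (μ ({ω | X t i j ω = 1} ∩ {ω | ∀ s, s < t → X s i j ω = x s})).toReal =
      (exp (β i 0 + β j 0) / (1 + exp (β i 0 + β j 0) + exp (β i 1 + β j 1))) *
        (μ {ω | ∀ s, s < t → X s i j ω = x s}).toReal
  markov_one : ∀ (i j : Fin p), i < j → ∀ t : ℕ, 1 ≤ t → t ≤ n → ∀ x : ℕ → ℝ,
    (∀ s, s < t → x s = 0 ∨ x s = 1) → x (t - 1) = 1 →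
    0 < μ {ω | ∀ s, s < t → X s i j ω = x s} →
    (μ ({ω | X t i j ω = 1} ∩ {ω | ∀ s, s < t → X s i j ω = x s})).toReal =
      ((exp (β i 0 + β j 0) + exp (β i 1 + β j 1)) /
          (1 + exp (β i 0 + β j 0) + exp (β i 1 + β j 1))) *
        (μ {ω | ∀ s, s < t → X s i j ω = x s}).toReal

/-- The normalized negative log-likelihood `l(θ)` of the TWHM. -/
noncomputable def twhmLoss (n p : ℕ) {Ω : Type} (X : ℕ → Fin p → Fin p → Ω → ℝ)
    (ω : Ω) (β : Fin p → Fin 2 → ℝ) : ℝ :=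
  (1 / (p : ℝ)) * ∑ i : Fin p, ∑ j : Fin p,
      (if i < j then log (1 + exp (β i 0 + β j 0) + exp (β i 1 + β j 1)) else 0)
  - (1 / ((n : ℝ) * p)) * ∑ i : Fin p, ∑ j : Fin p,
      (if i < j then
        (β i 0 + β j 0) * (∑ t ∈ Finset.Icc 1 n, X t i j ω)
        + log (1 + exp (β i 1 + β j 1)) *
            (∑ t ∈ Finset.Icc 1 n, (1 - X t i j ω) * (1 - X (t - 1) i j ω))
        + log (1 + exp (β i 1 + β j 1 - β i 0 - β j 0)) *
            (∑ t ∈ Finset.Icc 1 n, X t i j ω * X (t - 1) i j ω)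
      else 0)


/-- The symmetric extension of `X`: for `i > j`, `X^t_{i,j} = X^t_{j,i}`. -/
noncomputable def twhmXsym {p : ℕ} {Ω : Type} (X : ℕ → Fin p → Fin p → Ω → ℝ)
    (t : ℕ) (i j : Fin p) (ω : Ω) : ℝ :=
  if i < j then X t i j ω else X t j i ω

/-- The degree of node `i` at time `t`. -/
noncomputable def twhmDeg {p : ℕ} {Ω : Type} (X : ℕ → Fin p → Fin p → Ω → ℝ)
    (i : Fin p) (t : ℕ) (ω : Ω) : ℝ :=
  ∑ k ∈ Finset.univ.erase i, twhmXsym X t i k ω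

/-- Covariance `Cov(f,g) = E(fg) − E(f)E(g)`. -/
noncomputable def covQ {Ω : Type} [MeasurableSpace Ω] (μ : Measure Ω) (f g : Ω → ℝ) : ℝ :=
  (∫ ω, f ω * g ω ∂μ) - (∫ ω, f ω ∂μ) * ∫ ω, g ω ∂μ

section BinaryFunction

variable {Ω : Type*} {f g : Ω → ℝ}

lemma eq_indicator_one_of_binary (hbin : ∀ ω, f ω = 0 ∨ f ω = 1) :
    f = {ω | f ω = 1}.indicator 1 :=
  funext fun ω => by rcases hbin ω with h | h <;> simp [h]

variable [MeasurableSpace Ω] {μ : Measure Ω}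

lemma memLp_of_binary [IsFiniteMeasure μ] (hf : Measurable f) (hbin : ∀ ω, f ω = 0 ∨ f ω = 1)
    (p : ENNReal) : MemLp f p μ :=
  .of_bound hf.aestronglyMeasurable 1 <| ae_of_all _ fun ω => by
    rcases hbin ω with h | h <;> simp [h]

lemma integral_eq_measureReal_of_binary (hf : Measurable f) (hbin : ∀ ω, f ω = 0 ∨ f ω = 1) :
    ∫ ω, f ω ∂μ = μ.real {ω | f ω = 1} := by
  conv_lhs => rw [eq_indicator_one_of_binary hbin]
  exact integral_indicator_one (measurableSet_eq_fun hf measurable_const)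

lemma integral_mul_eq_measureReal_inter_of_binary (hf : Measurable f) (hg : Measurable g)
    (hfbin : ∀ ω, f ω = 0 ∨ f ω = 1) (hgbin : ∀ ω, g ω = 0 ∨ g ω = 1) :
    ∫ ω, f ω * g ω ∂μ = μ.real ({ω | f ω = 1} ∩ {ω | g ω = 1}) := by
  have hfg : (fun ω => f ω * g ω) = ({ω | f ω = 1} ∩ {ω | g ω = 1}).indicator 1 := by
    rw [Set.inter_indicator_one, ← eq_indicator_one_of_binary hfbin,
      ← eq_indicator_one_of_binary hgbin]
    rfl
  rw [hfg]
  exact integral_indicator_one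
    ((measurableSet_eq_fun hf measurable_const).inter (measurableSet_eq_fun hg measurable_const))

end BinaryFunction

lemma covQ_eq_covariance {Ω : Type} [MeasurableSpace Ω] {μ : Measure Ω} [IsProbabilityMeasure μ]
    {f g : Ω → ℝ} (hf : MemLp f 2 μ) (hg : MemLp g 2 μ) : covQ μ f g = cov[f, g; μ] :=
  (covariance_eq_sub hf hg).symm

section PastOnes

variable {Ω : Type*} {Y : ℕ → Ω → ℝ}

/-- Its fibres are the path events `{ω | ∀ s < t, Y s ω = x s}` of the Markov property. -/
noncomputable def pastOnes (Y : ℕ → Ω → ℝ) (t : ℕ) (ω : Ω) : Finset ℕ := {s ∈ range t | Y s ω = 1}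

@[simp]
lemma mem_pastOnes {t s : ℕ} {ω : Ω} : s ∈ pastOnes Y t ω ↔ s < t ∧ Y s ω = 1 := by
  simp [pastOnes]

lemma pastOnes_preimage_singleton (hbin : ∀ s ω, Y s ω = 0 ∨ Y s ω = 1) {t : ℕ}
    {S : Finset ℕ} (hS : S ⊆ range t) :
    pastOnes Y t ⁻¹' {S} = {ω | ∀ s, s < t → Y s ω = if s ∈ S then 1 else 0} := by
  ext ω
  simp only [Set.mem_preimage, Set.mem_singleton_iff, Set.mem_ofPred_eq, Finset.ext_iff,
    mem_pastOnes]
  refine ⟨fun h s hs => ?_, fun h s => ?_⟩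
  · by_cases hsS : s ∈ S
    · simpa [hsS] using ((h s).mpr hsS).2
    · rcases hbin s ω with h0 | h1
      · simp [hsS, h0]
      · exact absurd ((h s).mp ⟨hs, h1⟩) hsS
  · by_cases hst : s < t
    · by_cases hsS : s ∈ S <;> simp [h s hst, hsS, hst]
    · have : s ∉ S := fun hsS => hst (mem_range.mp (hS hsS))
      simp [hst, this]

variable [MeasurableSpace Ω] {μ : Measure Ω}

lemma measurable_pastOnes (hY : ∀ s, Measurable (Y s)) (t : ℕ) : Measurable (pastOnes Y t) := by
  refine measurable_finset_iff.mpr fun s => ?_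
  simp only [mem_pastOnes]
  exact measurable_const.and
    (measurableSet_setOfPred.mp (measurableSet_eq_fun (hY s) measurable_const))

lemma measurableSet_pastOnes_preimage (hY : ∀ s, Measurable (Y s)) (t : ℕ)
    (𝒮 : Set (Finset ℕ)) : MeasurableSet (pastOnes Y t ⁻¹' 𝒮) :=
  measurable_pastOnes hY t 𝒮.to_countable.measurableSet

lemma measureReal_eq_sum_pastOnes [IsFiniteMeasure μ] (hY : ∀ s, Measurable (Y s))
    (A : Set Ω) (t : ℕ) :
    μ.real A = ∑ S ∈ (range t).powerset, μ.real (A ∩ pastOnes Y t ⁻¹' {S}) := by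
  have hcover : pastOnes Y t ⁻¹' ↑(range t).powerset = Set.univ :=
    Set.eq_univ_of_forall fun ω => by
      simp only [coe_powerset, coe_range, Set.mem_preimage]
      exact fun s hs => (mem_pastOnes.mp hs).1
  rw [← measureReal_restrict_apply_univ, ← hcover,
    ← sum_measureReal_preimage_singleton _ fun S _ => measurableSet_pastOnes_preimage hY t _]
  refine sum_congr rfl fun S _ => ?_
  rw [measureReal_restrict_apply (measurableSet_pastOnes_preimage hY t _), Set.inter_comm]

end PastOnes

section BinaryMarkovChain

variable {Ω : Type*} [MeasurableSpace Ω] {μ : Measure Ω} {Y : ℕ → Ω → ℝ} {n : ℕ} {a b q : ℝ}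

structure IsBinaryMarkovChain (μ : Measure Ω) (Y : ℕ → Ω → ℝ) (n : ℕ) (a b : ℝ) : Prop where
  measurable : ∀ t, Measurable (Y t)
  binary : ∀ t ω, Y t ω = 0 ∨ Y t ω = 1
  step_of_zero : ∀ t : ℕ, 1 ≤ t → t ≤ n → ∀ x : ℕ → ℝ,
    (∀ s, s < t → x s = 0 ∨ x s = 1) → x (t - 1) = 0 →
    0 < μ {ω | ∀ s, s < t → Y s ω = x s} →
    μ.real ({ω | Y t ω = 1} ∩ {ω | ∀ s, s < t → Y s ω = x s}) =
      a * μ.real {ω | ∀ s, s < t → Y s ω = x s}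
  step_of_one : ∀ t : ℕ, 1 ≤ t → t ≤ n → ∀ x : ℕ → ℝ,
    (∀ s, s < t → x s = 0 ∨ x s = 1) → x (t - 1) = 1 →
    0 < μ {ω | ∀ s, s < t → Y s ω = x s} →
    μ.real ({ω | Y t ω = 1} ∩ {ω | ∀ s, s < t → Y s ω = x s}) =
      b * μ.real {ω | ∀ s, s < t → Y s ω = x s}

namespace IsBinaryMarkovChain

lemma measureReal_one_inter_pastOnes_fibre (hY : IsBinaryMarkovChain μ Y n a b) {t : ℕ}
    (ht : t + 1 ≤ n) {S : Finset ℕ} (hS : S ⊆ range (t + 1)) :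
    μ.real ({ω | Y (t + 1) ω = 1} ∩ pastOnes Y (t + 1) ⁻¹' {S}) =
      (if t ∈ S then b else a) * μ.real (pastOnes Y (t + 1) ⁻¹' {S}) := by
  set x : ℕ → ℝ := fun s => if s ∈ S then 1 else 0
  have hE : pastOnes Y (t + 1) ⁻¹' {S} = {ω | ∀ s, s < t + 1 → Y s ω = x s} :=
    pastOnes_preimage_singleton hY.binary hS
  rw [hE]
  have hx : ∀ s, s < t + 1 → x s = 0 ∨ x s = 1 := fun s _ => by
    by_cases h : s ∈ S <;> simp [x, h]
  rcases eq_or_ne (μ {ω | ∀ s, s < t + 1 → Y s ω = x s}) 0 with h0 | hpos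
  · simp only [Measure.real, h0, measure_mono_null Set.inter_subset_right h0]
    simp
  · by_cases htS : t ∈ S
    · rw [if_pos htS]
      exact hY.step_of_one (t + 1) (by omega) ht x hx (by simp [x, htS]) (pos_iff_ne_zero.mpr hpos)
    · rw [if_neg htS]
      exact hY.step_of_zero (t + 1) (by omega) ht x hx (by simp [x, htS]) (pos_iff_ne_zero.mpr hpos)

lemma measureReal_succ_inter [IsFiniteMeasure μ] (hY : IsBinaryMarkovChain μ Y n a b) {t : ℕ}
    (ht : t + 1 ≤ n) (𝒮 : Set (Finset ℕ)) :
    μ.real ({ω | Y (t + 1) ω = 1} ∩ pastOnes Y (t + 1) ⁻¹' 𝒮) =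
      a * μ.real (pastOnes Y (t + 1) ⁻¹' 𝒮) +
        (b - a) * μ.real ({ω | Y t ω = 1} ∩ pastOnes Y (t + 1) ⁻¹' 𝒮) := by
  set B := pastOnes Y (t + 1) ⁻¹' 𝒮
  rw [measureReal_eq_sum_pastOnes hY.measurable ({ω | Y (t + 1) ω = 1} ∩ B) (t + 1),
    measureReal_eq_sum_pastOnes hY.measurable B (t + 1),
    measureReal_eq_sum_pastOnes hY.measurable ({ω | Y t ω = 1} ∩ B) (t + 1),
    mul_sum, mul_sum, ← sum_add_distrib]
  refine sum_congr rfl fun S hS => ?_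
  set F := pastOnes Y (t + 1) ⁻¹' {S}
  have hF : ∀ ω ∈ F, pastOnes Y (t + 1) ω = S := fun ω hω => hω
  rw [Set.inter_assoc, Set.inter_assoc]
  by_cases h𝒮 : S ∈ 𝒮
  · have hBF : B ∩ F = F := Set.inter_eq_right.mpr fun ω hω => by simp [B, hF ω hω, h𝒮]
    have hYF : {ω | Y t ω = 1} ∩ F = if t ∈ S then F else ∅ := by
      split_ifs with htS
      · exact Set.inter_eq_right.mpr fun ω hω => (mem_pastOnes.mp ((hF ω hω).symm ▸ htS)).2
      · exact Set.eq_empty_of_forall_notMem fun ω hω =>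
          htS (hF ω hω.2 ▸ mem_pastOnes.mpr ⟨lt_add_one t, hω.1⟩)
    rw [hBF, hYF, measureReal_one_inter_pastOnes_fibre hY ht (mem_powerset.mp hS)]
    split_ifs
    · ring
    · simp [F]
  · have hBF : B ∩ F = ∅ :=
      Set.eq_empty_of_forall_notMem fun ω hω => h𝒮 (hF ω hω.2 ▸ hω.1)
    simp [hBF]

lemma measureReal_eq_one_of_stationary [IsProbabilityMeasure μ] (hY : IsBinaryMarkovChain μ Y n a b)
    (h0 : μ.real {ω | Y 0 ω = 1} = q) (hq : a + (b - a) * q = q) {t : ℕ} (ht : t ≤ n) :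
    μ.real {ω | Y t ω = 1} = q := by
  induction t with
  | zero => exact h0
  | succ t ih =>
    have h := hY.measureReal_succ_inter ht Set.univ
    simp only [Set.preimage_univ, Set.inter_univ, probReal_univ, mul_one] at h
    rw [h, ih (by omega), hq]

lemma measureReal_one_inter_one [IsProbabilityMeasure μ] (hY : IsBinaryMarkovChain μ Y n a b)
    (h0 : μ.real {ω | Y 0 ω = 1} = q) (hq : a + (b - a) * q = q) {s d : ℕ} (hsd : s + d ≤ n) :
    μ.real ({ω | Y (s + d) ω = 1} ∩ {ω | Y s ω = 1}) = q ^ 2 + (b - a) ^ d * (q * (1 - q)) := by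
  induction d with
  | zero =>
    rw [add_zero, Set.inter_self, hY.measureReal_eq_one_of_stationary (t := s) h0 hq (by omega)]
    ring
  | succ d ih =>
    have hpast : {ω | Y s ω = 1} = pastOnes Y (s + d + 1) ⁻¹' {S | s ∈ S} := by
      ext ω
      simp only [Set.mem_ofPred_eq, Set.mem_preimage, mem_pastOnes]
      exact (and_iff_right (by omega)).symm
    rw [← add_assoc, hpast, hY.measureReal_succ_inter (t := s + d) (by omega), ← hpast,
      ih (by omega), hY.measureReal_eq_one_of_stationary h0 hq (by omega : s ≤ n)]
    linear_combination q * hq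

lemma covariance_eq [IsProbabilityMeasure μ] (hY : IsBinaryMarkovChain μ Y n a b)
    (h0 : μ.real {ω | Y 0 ω = 1} = q) (hq : a + (b - a) * q = q) {t s : ℕ}
    (ht : t ≤ n) (hs : s ≤ n) :
    cov[Y t, Y s; μ] = (b - a) ^ ((t : ℤ) - s).natAbs * (q * (1 - q)) := by
  wlog hst : s ≤ t generalizing t s
  · rw [covariance_comm, this hs ht (by omega), ← Int.natAbs_neg, neg_sub]
  obtain ⟨d, rfl⟩ := Nat.exists_eq_add_of_le hst
  have hmem := fun u => memLp_of_binary (μ := μ) (hY.measurable u) (hY.binary u) 2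
  have hint := fun u => integral_eq_measureReal_of_binary (μ := μ) (hY.measurable u) (hY.binary u)
  rw [covariance_eq_sub (hmem _) (hmem _), Pi.mul_def,
    integral_mul_eq_measureReal_inter_of_binary (hY.measurable _) (hY.measurable _)
      (hY.binary _) (hY.binary _),
    hint, hint, hY.measureReal_one_inter_one h0 hq ht,
    hY.measureReal_eq_one_of_stationary h0 hq ht, hY.measureReal_eq_one_of_stationary h0 hq hs,
    show ((s + d : ℕ) - s : ℤ).natAbs = d by omega]
  ring

end IsBinaryMarkovChain

end BinaryMarkovChain

lemma eq_of_min_eq_of_max_eq {α : Type*} [LinearOrder α] {i k l : α}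
    (hmin : min i k = min i l) (hmax : max i k = max i l) : k = l := by
  grind

lemma twhmXsym_eq_min_max {p : ℕ} {Ω : Type} (X : ℕ → Fin p → Fin p → Ω → ℝ) (t : ℕ)
    (i k : Fin p) : twhmXsym X t i k = X t (min i k) (max i k) := by
  funext ω
  rcases lt_or_ge i k with h | h
  · simp [twhmXsym, h, min_eq_left h.le, max_eq_right h.le]
  · simp [twhmXsym, h.not_gt, min_eq_right h, max_eq_left h]

lemma twhm_stationary {x y : ℝ} (hx : 0 ≤ x) (hy : 0 ≤ y) :
    x / (1 + x + y) + ((x + y) / (1 + x + y) - x / (1 + x + y)) * (x / (1 + x)) = x / (1 + x) := by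
  have : 1 + x + y ≠ 0 := by positivity
  have : 1 + x ≠ 0 := by positivity
  field_simp
  ring

lemma logistic_mul_one_sub {x : ℝ} (hx : 0 ≤ x) :
    x / (1 + x) * (1 - x / (1 + x)) = x / (1 + x) ^ 2 := by
  have : 1 + x ≠ 0 := by positivity
  field_simp
  ring

namespace TWHM

variable {n p : ℕ} {Ω : Type} [MeasurableSpace Ω] {μ : Measure Ω} {βs : Fin p → Fin 2 → ℝ}
  {X : ℕ → Fin p → Fin p → Ω → ℝ}

lemma isBinaryMarkovChain (hm : TWHM n p Ω μ βs X) {i j : Fin p} (hij : i < j) :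
    IsBinaryMarkovChain μ (fun t => X t i j) n
      (exp (βs i 0 + βs j 0) / (1 + exp (βs i 0 + βs j 0) + exp (βs i 1 + βs j 1)))
      ((exp (βs i 0 + βs j 0) + exp (βs i 1 + βs j 1)) /
        (1 + exp (βs i 0 + βs j 0) + exp (βs i 1 + βs j 1))) where
  measurable t := hm.meas t i j
  binary t := hm.binary t i j hij
  step_of_zero := hm.markov_zero i j hij
  step_of_one := hm.markov_one i j hij

lemma isBinaryMarkovChain_twhmXsym (hm : TWHM n p Ω μ βs X) {i k : Fin p} (hik : i ≠ k) :
    IsBinaryMarkovChain μ (fun t => twhmXsym X t i k) n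
      (exp (βs i 0 + βs k 0) / (1 + exp (βs i 0 + βs k 0) + exp (βs i 1 + βs k 1)))
      ((exp (βs i 0 + βs k 0) + exp (βs i 1 + βs k 1)) /
        (1 + exp (βs i 0 + βs k 0) + exp (βs i 1 + βs k 1))) := by
  simp only [twhmXsym_eq_min_max]
  rcases hik.lt_or_gt with h | h
  · simpa only [min_eq_left h.le, max_eq_right h.le] using hm.isBinaryMarkovChain h
  · simpa only [min_eq_right h.le, max_eq_left h.le, add_comm (βs k _)]
      using hm.isBinaryMarkovChain h

lemma measureReal_twhmXsym_zero_eq_one (hm : TWHM n p Ω μ βs X) {i k : Fin p} (hik : i ≠ k) :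
    μ.real {ω | twhmXsym X 0 i k ω = 1} = exp (βs i 0 + βs k 0) / (1 + exp (βs i 0 + βs k 0)) := by
  rw [twhmXsym_eq_min_max]
  rcases hik.lt_or_gt with h | h
  · simpa only [measureReal_def, min_eq_left h.le, max_eq_right h.le] using hm.init i k h
  · simpa only [measureReal_def, min_eq_right h.le, max_eq_left h.le, add_comm (βs k _)]
      using hm.init k i h

lemma indepFun (hm : TWHM n p Ω μ βs X) {i j k l : Fin p} (hij : i < j) (hkl : k < l)
    (hne : (i, j) ≠ (k, l)) {t s : ℕ} (ht : t ≤ n) (hs : s ≤ n) :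
    IndepFun (X t i j) (X s k l) μ := by
  have hq : (⟨(i, j), hij⟩ : {q : Fin p × Fin p // q.1 < q.2}) ≠ ⟨(k, l), hkl⟩ := by
    simpa using hne
  exact (hm.indep.indepFun hq).comp (measurable_pi_apply (⟨t, by omega⟩ : Fin (n + 1)))
    (measurable_pi_apply (⟨s, by omega⟩ : Fin (n + 1)))

lemma indepFun_twhmXsym (hm : TWHM n p Ω μ βs X) {i k l : Fin p} (hk : i ≠ k) (hl : i ≠ l)
    (hkl : k ≠ l) {t s : ℕ} (ht : t ≤ n) (hs : s ≤ n) :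
    IndepFun (twhmXsym X t i k) (twhmXsym X s i l) μ := by
  rw [twhmXsym_eq_min_max, twhmXsym_eq_min_max]
  refine hm.indepFun (min_lt_max.mpr hk) (min_lt_max.mpr hl) (fun h => hkl ?_) ht hs
  exact eq_of_min_eq_of_max_eq (Prod.ext_iff.mp h).1 (Prod.ext_iff.mp h).2

lemma memLp_twhmXsym (hm : TWHM n p Ω μ βs X) {i k : Fin p} (hik : i ≠ k) (t : ℕ) (q : ENNReal) :
    MemLp (twhmXsym X t i k) q μ :=
  have := hm.isProb
  memLp_of_binary ((hm.isBinaryMarkovChain_twhmXsym hik).measurable t)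
    ((hm.isBinaryMarkovChain_twhmXsym hik).binary t) q

lemma measureReal_twhmXsym_eq_one (hm : TWHM n p Ω μ βs X) {i k : Fin p} (hik : i ≠ k) {t : ℕ}
    (ht : t ≤ n) :
    μ.real {ω | twhmXsym X t i k ω = 1} =
      exp (βs i 0 + βs k 0) / (1 + exp (βs i 0 + βs k 0)) :=
  have := hm.isProb
  (hm.isBinaryMarkovChain_twhmXsym hik).measureReal_eq_one_of_stationary
    (hm.measureReal_twhmXsym_zero_eq_one hik) (twhm_stationary (exp_pos _).le (exp_pos _).le) ht

lemma integral_twhmXsym (hm : TWHM n p Ω μ βs X) {i k : Fin p} (hik : i ≠ k) {t : ℕ} (ht : t ≤ n) :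
    ∫ ω, twhmXsym X t i k ω ∂μ = exp (βs i 0 + βs k 0) / (1 + exp (βs i 0 + βs k 0)) := by
  rw [integral_eq_measureReal_of_binary ((hm.isBinaryMarkovChain_twhmXsym hik).measurable t)
    ((hm.isBinaryMarkovChain_twhmXsym hik).binary t), hm.measureReal_twhmXsym_eq_one hik ht]

lemma covariance_twhmXsym (hm : TWHM n p Ω μ βs X) {i k : Fin p} (hik : i ≠ k) {t s : ℕ}
    (ht : t ≤ n) (hs : s ≤ n) :
    cov[twhmXsym X t i k, twhmXsym X s i k; μ] =
      (exp (βs i 1 + βs k 1) / (1 + exp (βs i 0 + βs k 0) + exp (βs i 1 + βs k 1))) ^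
          ((t : ℤ) - s).natAbs *
        (exp (βs i 0 + βs k 0) / (1 + exp (βs i 0 + βs k 0)) ^ 2) := by
  have := hm.isProb
  refine ((hm.isBinaryMarkovChain_twhmXsym hik).covariance_eq
    (hm.measureReal_twhmXsym_zero_eq_one hik) (twhm_stationary (exp_pos _).le (exp_pos _).le)
    ht hs).trans ?_
  rw [logistic_mul_one_sub (exp_pos _).le]
  ring

lemma integral_twhmDeg (hm : TWHM n p Ω μ βs X) (i : Fin p) {t : ℕ} (ht : t ≤ n) :
    ∫ ω, twhmDeg X i t ω ∂μ =
      ∑ k ∈ univ.erase i, exp (βs i 0 + βs k 0) / (1 + exp (βs i 0 + βs k 0)) := by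
  have := hm.isProb
  unfold twhmDeg
  rw [integral_finsetSum _ fun k hk =>
    (hm.memLp_twhmXsym (ne_of_mem_erase hk).symm t 1).integrable le_rfl]
  exact sum_congr rfl fun k hk => hm.integral_twhmXsym (ne_of_mem_erase hk).symm ht

lemma covQ_twhmDeg (hm : TWHM n p Ω μ βs X) (i : Fin p) {t s : ℕ} (ht : t ≤ n) (hs : s ≤ n) :
    covQ μ (twhmDeg X i t) (twhmDeg X i s) =
      ∑ k ∈ univ.erase i,
        (exp (βs i 1 + βs k 1) / (1 + exp (βs i 0 + βs k 0) + exp (βs i 1 + βs k 1))) ^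
            ((t : ℤ) - s).natAbs *
          (exp (βs i 0 + βs k 0) / (1 + exp (βs i 0 + βs k 0)) ^ 2) := by
  have := hm.isProb
  have hmem : ∀ u, ∀ k ∈ univ.erase i, MemLp (twhmXsym X u i k) 2 μ :=
    fun u k hk => hm.memLp_twhmXsym (ne_of_mem_erase hk).symm u 2
  unfold twhmDeg
  rw [covQ_eq_covariance (memLp_finsetSum _ (hmem t)) (memLp_finsetSum _ (hmem s)),
    covariance_fun_sum_fun_sum' (hmem t) (hmem s)]
  refine sum_congr rfl fun k hk => ?_
  rw [sum_eq_single_of_mem k hk fun l hl hlk =>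
    (hm.indepFun_twhmXsym (ne_of_mem_erase hk).symm (ne_of_mem_erase hl).symm (Ne.symm hlk) ht hs
      ).covariance_eq_zero (hmem t k hk) (hmem s l hl)]
  exact hm.covariance_twhmXsym (ne_of_mem_erase hk).symm ht hs

end TWHM

theorem twhm_degree_moments_general (n p : ℕ)
    (Ω : Type) [MeasurableSpace Ω] (μ : Measure Ω)
    (βs : Fin p → Fin 2 → ℝ) (X : ℕ → Fin p → Fin p → Ω → ℝ)
    (hmodel : TWHM n p Ω μ βs X)
    (i : Fin p) (t s : ℕ) (ht : t ≤ n) (hs : s ≤ n) :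
    (∫ ω, twhmDeg X i t ω ∂μ) =
      (∑ k ∈ Finset.univ.erase i,
        exp (βs i 0 + βs k 0) / (1 + exp (βs i 0 + βs k 0))) ∧
    covQ μ (twhmDeg X i t) (twhmDeg X i t) =
      (∑ k ∈ Finset.univ.erase i,
        exp (βs i 0 + βs k 0) / (1 + exp (βs i 0 + βs k 0)) ^ 2) ∧
    covQ μ (twhmDeg X i t) (twhmDeg X i s) /
        Real.sqrt (covQ μ (twhmDeg X i t) (twhmDeg X i t) *
          covQ μ (twhmDeg X i s) (twhmDeg X i s)) =
      (∑ k ∈ Finset.univ.erase i,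
          exp (βs i 0 + βs k 0) / (1 + exp (βs i 0 + βs k 0)) ^ 2)⁻¹ *
        ∑ k ∈ Finset.univ.erase i,
          (exp (βs i 1 + βs k 1) /
              (1 + exp (βs i 0 + βs k 0) + exp (βs i 1 + βs k 1))) ^
              (((t : ℤ) - (s : ℤ)).natAbs) *
            (exp (βs i 0 + βs k 0) / (1 + exp (βs i 0 + βs k 0)) ^ 2) := by
  have hvar : ∀ u ≤ n, covQ μ (twhmDeg X i u) (twhmDeg X i u) =
      ∑ k ∈ univ.erase i, exp (βs i 0 + βs k 0) / (1 + exp (βs i 0 + βs k 0)) ^ 2 :=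
    fun u hu => by simpa using hmodel.covQ_twhmDeg i hu hu
  refine ⟨hmodel.integral_twhmDeg i ht, hvar t ht, ?_⟩
  rw [hvar t ht, hvar s hs, Real.sqrt_mul_self (sum_nonneg fun k _ => by positivity),
    hmodel.covQ_twhmDeg i ht hs, div_eq_inv_mul]

/-- Proposition 1: mean, variance and autocorrelation of the degree sequences under
the TWHM. -/
theorem twhm_degree_moments (n p : ℕ) (hn : 1 ≤ n) (hp : 2 ≤ p)
    (Ω : Type) [MeasurableSpace Ω] (μ : Measure Ω)
    (βs : Fin p → Fin 2 → ℝ) (X : ℕ → Fin p → Fin p → Ω → ℝ)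
    (hmodel : TWHM n p Ω μ βs X)
    (i : Fin p) (t s : ℕ) (ht : t ≤ n) (hs : s ≤ n) :
    (∫ ω, twhmDeg X i t ω ∂μ) =
      (∑ k ∈ Finset.univ.erase i,
        exp (βs i 0 + βs k 0) / (1 + exp (βs i 0 + βs k 0))) ∧
    covQ μ (twhmDeg X i t) (twhmDeg X i t) =
      (∑ k ∈ Finset.univ.erase i,
        exp (βs i 0 + βs k 0) / (1 + exp (βs i 0 + βs k 0)) ^ 2) ∧
    covQ μ (twhmDeg X i t) (twhmDeg X i s) /
        Real.sqrt (covQ μ (twhmDeg X i t) (twhmDeg X i t) *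
          covQ μ (twhmDeg X i s) (twhmDeg X i s)) =
      (∑ k ∈ Finset.univ.erase i,
          exp (βs i 0 + βs k 0) / (1 + exp (βs i 0 + βs k 0)) ^ 2)⁻¹ *
        ∑ k ∈ Finset.univ.erase i,
          (exp (βs i 1 + βs k 1) /
              (1 + exp (βs i 0 + βs k 0) + exp (βs i 1 + βs k 1))) ^
              (((t : ℤ) - (s : ℤ)).natAbs) *
            (exp (βs i 0 + βs k 0) / (1 + exp (βs i 0 + βs k 0)) ^ 2) :=
  twhm_degree_moments_general n p Ω μ βs X hmodel i t s ht hs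
end

section
/- Let p ≥ 1 be an integer, let A₁, A₂, A₃ be symmetric p×p real matrices, and let A be the 2p×2p block matrix with blocks A₁ (top-left), A₂ (top-right and bottom-left), and A₃ (bottom-right). If the three matrices −A₂, A₂ + A₃ and A₂ + A₁ are all positive definite, then A is positive definite. Likewise, if −A₂, A₂ + A₃ and A₂ + A₁ are all negative definite, then A is negative definite. -/
open Matrix

/-- A real matrix is positive definite (in the quadratic-form sense):
`xᵀMx > 0` for every nonzero `x`. -/
def IsPosDefQF {m : Type*} [Fintype m] (M : Matrix m m ℝ) : Prop :=
  ∀ x : m → ℝ, x ≠ 0 → 0 < x ⬝ᵥ M.mulVec x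

/-- A real matrix is negative definite (in the quadratic-form sense):
`xᵀMx < 0` for every nonzero `x`. -/
def IsNegDefQF {m : Type*} [Fintype m] (M : Matrix m m ℝ) : Prop :=
  ∀ x : m → ℝ, x ≠ 0 → x ⬝ᵥ M.mulVec x < 0

lemma qf_key {p : ℕ} (A₁ A₂ A₃ : Matrix (Fin p) (Fin p) ℝ)
    (x : Fin p ⊕ Fin p → ℝ) :
    x ⬝ᵥ (fromBlocks A₁ A₂ A₂ A₃).mulVec x =
      (x ∘ Sum.inl) ⬝ᵥ (A₂ + A₁).mulVec (x ∘ Sum.inl) +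
      (x ∘ Sum.inr) ⬝ᵥ (A₂ + A₃).mulVec (x ∘ Sum.inr) +
      (x ∘ Sum.inl - x ∘ Sum.inr) ⬝ᵥ (-A₂).mulVec (x ∘ Sum.inl - x ∘ Sum.inr) := by
  set u := x ∘ Sum.inl
  set v := x ∘ Sum.inr
  have hx : x = Sum.elim u v := by ext (i | i) <;> rfl
  rw [hx, fromBlocks_mulVec, sumElim_dotProduct_sumElim]
  simp only [add_mulVec, neg_mulVec, mulVec_sub, dotProduct_add, dotProduct_sub,
    sub_dotProduct, dotProduct_neg, Sum.elim_comp_inl, Sum.elim_comp_inr]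
  ring

/-- Proposition 2: if `−A₂`, `A₂ + A₃` and `A₂ + A₁` are all positive (resp. negative)
definite, then the block matrix `[[A₁, A₂], [A₂, A₃]]` is positive (resp. negative)
definite. -/
theorem blockMatrix_posDef_negDef (p : ℕ) (hp : 1 ≤ p)
    (A₁ A₂ A₃ : Matrix (Fin p) (Fin p) ℝ)
    (h₁ : A₁.IsSymm) (h₂ : A₂.IsSymm) (h₃ : A₃.IsSymm) :
    ((IsPosDefQF (-A₂) ∧ IsPosDefQF (A₂ + A₃) ∧ IsPosDefQF (A₂ + A₁) →
        IsPosDefQF (fromBlocks A₁ A₂ A₂ A₃)) ∧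
      (IsNegDefQF (-A₂) ∧ IsNegDefQF (A₂ + A₃) ∧ IsNegDefQF (A₂ + A₁) →
        IsNegDefQF (fromBlocks A₁ A₂ A₂ A₃))) := by
  constructor
  · rintro ⟨hn, h23, h21⟩ x hx
    rw [qf_key]
    have hle : ∀ (M : Matrix (Fin p) (Fin p) ℝ), IsPosDefQF M → ∀ y, 0 ≤ y ⬝ᵥ M.mulVec y := by
      intro M hM y
      by_cases hy : y = 0
      · simp [hy]
      · exact le_of_lt (hM y hy)
    have huv : x ∘ Sum.inl ≠ 0 ∨ x ∘ Sum.inr ≠ 0 := by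
      by_contra h
      push_neg at h
      apply hx
      ext (i | i)
      · exact congrFun h.1 i
      · exact congrFun h.2 i
    have t3 := hle _ hn (x ∘ Sum.inl - x ∘ Sum.inr)
    rcases huv with h | h
    · have := h21 _ h
      have := hle _ h23 (x ∘ Sum.inr)
      linarith
    · have := h23 _ h
      have := hle _ h21 (x ∘ Sum.inl)
      linarith
  · rintro ⟨hn, h23, h21⟩ x hx
    rw [qf_key]
    have hle : ∀ (M : Matrix (Fin p) (Fin p) ℝ), IsNegDefQF M → ∀ y, y ⬝ᵥ M.mulVec y ≤ 0 := by
      intro M hM y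
      by_cases hy : y = 0
      · simp [hy]
      · exact le_of_lt (hM y hy)
    have huv : x ∘ Sum.inl ≠ 0 ∨ x ∘ Sum.inr ≠ 0 := by
      by_contra h
      push_neg at h
      apply hx
      ext (i | i)
      · exact congrFun h.1 i
      · exact congrFun h.2 i
    have t3 := hle _ hn (x ∘ Sum.inl - x ∘ Sum.inr)
    rcases huv with h | h
    · have := h21 _ h
      have := hle _ h23 (x ∘ Sum.inr)
      linarith
    · have := h23 _ h
      have := hle _ h21 (x ∘ Sum.inl)
      linarith
end

section
/- Under the two-state stationary Markov chain assumptions, for every integer t ≥ 1: E(X_t X_{t−1}) = α₀(α₀+α₁)/((1+α₀)(1+α₀+α₁)) and Var(X_t X_{t−1}) = α₀(α₀+α₁)(2α₀+α₁+1)/((1+α₀)²(1+α₀+α₁)²); moreover, for all integers t, s ≥ 1 with t ≠ s, Cov(X_t X_{t−1}, X_s X_{s−1}) = (α₁/(1+α₀+α₁))^{|t−s|−1} · α₀(α₀+α₁)²/((1+α₀)²(1+α₀+α₁)²). -/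
open MeasureTheory ProbabilityTheory Real

/-- A two-state stationary Markov chain with parameters `α₀, α₁`. -/
structure TwoStateChain (Ω : Type) [MeasurableSpace Ω] (μ : Measure Ω)
    (α₀ α₁ : ℝ) (X : ℕ → Ω → ℝ) : Prop where
  isProb : IsProbabilityMeasure μ
  pos₀ : 0 < α₀
  pos₁ : 0 < α₁
  meas : ∀ t, Measurable (X t)
  binary : ∀ t ω, X t ω = 0 ∨ X t ω = 1
  init : (μ {ω | X 0 ω = 1}).toReal = α₀ / (1 + α₀)
  markov_zero : ∀ t : ℕ, 1 ≤ t → ∀ x : ℕ → ℝ,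
    (∀ s, s < t → x s = 0 ∨ x s = 1) → x (t - 1) = 0 →
    0 < μ {ω | ∀ s, s < t → X s ω = x s} →
    (μ ({ω | X t ω = 1} ∩ {ω | ∀ s, s < t → X s ω = x s})).toReal =
      (α₀ / (1 + α₀ + α₁)) * (μ {ω | ∀ s, s < t → X s ω = x s}).toReal
  markov_one : ∀ t : ℕ, 1 ≤ t → ∀ x : ℕ → ℝ,
    (∀ s, s < t → x s = 0 ∨ x s = 1) → x (t - 1) = 1 →
    0 < μ {ω | ∀ s, s < t → X s ω = x s} →
    (μ ({ω | X t ω = 1} ∩ {ω | ∀ s, s < t → X s ω = x s})).toReal =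
      ((α₀ + α₁) / (1 + α₀ + α₁)) * (μ {ω | ∀ s, s < t → X s ω = x s}).toReal

/-! Since the chain takes finitely many values, the Markov property for full histories extends to
every event `A` determined by `X 0, …, X n`:
`P(A ∩ {X (n+1) = 1}) = q₀ P(A) + λ P(A ∩ {X n = 1})`, with `q₀ = α₀ / (1 + α₀ + α₁)` and
`λ = α₁ / (1 + α₀ + α₁)`. As `p = α₀ / (1 + α₀)` solves `p = q₀ + λ p`, iterating gives
`P(A ∩ {X (s+k) = 1}) = p P(A) + (P(A ∩ {X s = 1}) - p P(A)) λ ^ k`. For `A = Ω` this is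
stationarity; for `A = {X (s-1) = 1, X s = 1}` it yields the joint laws of the products
`X t X (t-1)`, which are indicators of such events. -/

theorem measureReal_preimage_inter_eq_sum {Ω β : Type*} [MeasurableSpace Ω] [MeasurableSpace β]
    [MeasurableSingletonClass β] {μ : Measure Ω} [IsFiniteMeasure μ] {f : Ω → β}
    (hf : Measurable f) {B : Finset β} (hB : ∀ ω, f ω ∈ B) (E : Set β) [DecidablePred (· ∈ E)]
    (F : Set Ω) :
    μ.real (f ⁻¹' E ∩ F) = ∑ x ∈ B with x ∈ E, μ.real (f ⁻¹' {x} ∩ F) := by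
  have hfE : f ⁻¹' E = f ⁻¹' ↑(B.filter (· ∈ E)) := by
    ext ω; simp [hB ω]
  simp only [← measureReal_restrict_apply (hf (measurableSet_singleton _))]
  rw [sum_measureReal_preimage_singleton _ fun x _ => hf (measurableSet_singleton x), hfE,
    measureReal_restrict_apply (hf (Finset.measurableSet _))]

theorem covQ_comm {Ω : Type} [MeasurableSpace Ω] (μ : Measure Ω) (f g : Ω → ℝ) :
    covQ μ f g = covQ μ g f := by
  simp only [covQ, mul_comm]

theorem covQ_indicator_one {Ω : Type} [MeasurableSpace Ω] (μ : Measure Ω) {A B : Set Ω}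
    (hA : MeasurableSet A) (hB : MeasurableSet B) :
    covQ μ (A.indicator 1) (B.indicator 1) = μ.real (A ∩ B) - μ.real A * μ.real B := by
  rw [covQ, ← integral_indicator_one hA, ← integral_indicator_one hB,
    ← integral_indicator_one (hA.inter hB), Set.inter_indicator_one]
  rfl

def history {Ω : Type} (X : ℕ → Ω → ℝ) (n : ℕ) (ω : Ω) : Fin n → ℝ := fun i => X i ω

def IsHistoryEvent {Ω : Type} (X : ℕ → Ω → ℝ) (n : ℕ) (A : Set Ω) : Prop :=
  ∃ E : Set (Fin n → ℝ), A = history X n ⁻¹' E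

namespace IsHistoryEvent

variable {Ω : Type} {X : ℕ → Ω → ℝ} {n : ℕ} {A B : Set Ω}

theorem univ : IsHistoryEvent X n Set.univ := ⟨Set.univ, rfl⟩

theorem eq_of_lt {i : ℕ} (hi : i < n) (c : ℝ) : IsHistoryEvent X n {ω | X i ω = c} :=
  ⟨{x | x ⟨i, hi⟩ = c}, rfl⟩

theorem inter : IsHistoryEvent X n A → IsHistoryEvent X n B → IsHistoryEvent X n (A ∩ B) := by
  rintro ⟨E, rfl⟩ ⟨F, rfl⟩
  exact ⟨E ∩ F, rfl⟩

theorem mono {m : ℕ} (hA : IsHistoryEvent X n A) (hnm : n ≤ m) : IsHistoryEvent X m A := by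
  obtain ⟨E, rfl⟩ := hA
  exact ⟨(fun x i => x (Fin.castLE hnm i)) ⁻¹' E, rfl⟩

end IsHistoryEvent

namespace TwoStateChain

variable {Ω : Type} [MeasurableSpace Ω] {μ : Measure Ω} {α₀ α₁ : ℝ} {X : ℕ → Ω → ℝ}
  (h : TwoStateChain Ω μ α₀ α₁ X)
include h

theorem measurableSet_eq (t : ℕ) (c : ℝ) : MeasurableSet {ω | X t ω = c} :=
  h.meas t (measurableSet_singleton c)

theorem measureReal_cylinder_inter_eq_one (n : ℕ) (x : Fin (n + 1) → ℝ)
    (hx : ∀ i, x i = 0 ∨ x i = 1) :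
    μ.real (history X (n + 1) ⁻¹' {x} ∩ {ω | X (n + 1) ω = 1}) =
      α₀ / (1 + α₀ + α₁) * μ.real (history X (n + 1) ⁻¹' {x}) +
        α₁ / (1 + α₀ + α₁) * μ.real (history X (n + 1) ⁻¹' {x} ∩ {ω | X n ω = 1}) := by
  set x' : ℕ → ℝ := fun s => if hs : s < n + 1 then x ⟨s, hs⟩ else 0
  have hC : history X (n + 1) ⁻¹' {x} = {ω | ∀ s, s < n + 1 → X s ω = x' s} := by
    ext ω
    simp only [history, Set.mem_preimage, Set.mem_singleton_iff, funext_iff, Fin.forall_iff,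
      Set.mem_ofPred_eq]
    exact forall₂_congr fun s hs => by simp only [x', dif_pos hs]
  have hx' : ∀ s, s < n + 1 → x' s = 0 ∨ x' s = 1 := fun s hs => by
    simp only [x', dif_pos hs]; exact hx ⟨s, hs⟩
  have hlast : x' (n + 1 - 1) = x (Fin.last n) := by simp [x', Fin.last]
  rw [hC, Set.inter_comm _ {ω | X (n + 1) ω = 1}]
  rcases eq_or_ne (μ {ω | ∀ s, s < n + 1 → X s ω = x' s}) 0 with hnull | hpos
  · simp only [measureReal_def, hnull, measure_mono_null Set.inter_subset_right hnull,
      measure_mono_null Set.inter_subset_left hnull]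
    simp
  rcases hx (Fin.last n) with h0 | h1
  · have hempty : {ω | ∀ s, s < n + 1 → X s ω = x' s} ∩ {ω | X n ω = 1} = ∅ := by
      refine Set.eq_empty_of_forall_notMem fun ω ⟨hω, hn⟩ => ?_
      have := hω n n.lt_succ_self
      simp_all
    rw [hempty, measureReal_empty]
    simp only [measureReal_def]
    rw [h.markov_zero (n + 1) le_add_self x' hx' (hlast.trans h0) (pos_iff_ne_zero.2 hpos)]
    ring
  · have hsub : {ω | ∀ s, s < n + 1 → X s ω = x' s} ∩ {ω | X n ω = 1} =
        {ω | ∀ s, s < n + 1 → X s ω = x' s} := by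
      refine Set.inter_eq_left.2 fun ω hω => ?_
      have := hω n n.lt_succ_self
      simp_all
    simp only [hsub, measureReal_def]
    rw [h.markov_one (n + 1) le_add_self x' hx' (hlast.trans h1) (pos_iff_ne_zero.2 hpos)]
    ring

theorem measureReal_inter_eq_one_succ {n : ℕ} {A : Set Ω} (hA : IsHistoryEvent X (n + 1) A) :
    μ.real (A ∩ {ω | X (n + 1) ω = 1}) =
      α₀ / (1 + α₀ + α₁) * μ.real A + α₁ / (1 + α₀ + α₁) * μ.real (A ∩ {ω | X n ω = 1}) := by
  classical
  obtain ⟨E, rfl⟩ := hA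
  have := h.isProb
  have hH : Measurable (history X (n + 1)) := measurable_pi_lambda _ fun i => h.meas i
  have hB : ∀ ω, history X (n + 1) ω ∈ Fintype.piFinset fun _ => ({0, 1} : Finset ℝ) :=
    fun ω => Fintype.mem_piFinset.2 fun i => by simpa [history] using h.binary i ω
  have hsum := measureReal_preimage_inter_eq_sum (μ := μ) hH hB E
  have hsum_univ := hsum Set.univ
  simp only [Set.inter_univ] at hsum_univ
  rw [hsum, hsum, hsum_univ, Finset.mul_sum, Finset.mul_sum, ← Finset.sum_add_distrib]
  refine Finset.sum_congr rfl fun x hx => ?_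
  exact h.measureReal_cylinder_inter_eq_one n x fun i => by
    simpa using Fintype.mem_piFinset.1 (Finset.mem_filter.1 hx).1 i

theorem measureReal_inter_eq_one_add {s : ℕ} {A : Set Ω} (hA : IsHistoryEvent X (s + 1) A)
    (k : ℕ) :
    μ.real (A ∩ {ω | X (s + k) ω = 1}) = α₀ / (1 + α₀) * μ.real A +
      (μ.real (A ∩ {ω | X s ω = 1}) - α₀ / (1 + α₀) * μ.real A) * (α₁ / (1 + α₀ + α₁)) ^ k := by
  have hp : 0 < 1 + α₀ := by linarith [h.pos₀]
  have hq : 0 < 1 + α₀ + α₁ := by linarith [h.pos₀, h.pos₁]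
  induction k with
  | zero => simp
  | succ k ih =>
    rw [← add_assoc, h.measureReal_inter_eq_one_succ (hA.mono (by omega)), ih, pow_succ]
    field_simp
    ring

theorem measureReal_eq_one (t : ℕ) : μ.real {ω | X t ω = 1} = α₀ / (1 + α₀) := by
  have := h.isProb
  have h0 : μ.real {ω | X 0 ω = 1} = α₀ / (1 + α₀) := h.init
  simpa [h0] using h.measureReal_inter_eq_one_add (s := 0) IsHistoryEvent.univ t

theorem measureReal_eq_one_inter_eq_one (n : ℕ) :
    μ.real ({ω | X (n + 1) ω = 1} ∩ {ω | X n ω = 1}) =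
      (α₀ + α₁) / (1 + α₀ + α₁) * (α₀ / (1 + α₀)) := by
  rw [Set.inter_comm, h.measureReal_inter_eq_one_succ (IsHistoryEvent.eq_of_lt n.lt_succ_self 1),
    Set.inter_self, h.measureReal_eq_one]
  ring

theorem measureReal_pair_inter_pair {m n : ℕ} (hmn : m < n) :
    μ.real (({ω | X (n + 1) ω = 1} ∩ {ω | X n ω = 1}) ∩
        ({ω | X (m + 1) ω = 1} ∩ {ω | X m ω = 1})) =
      (α₀ + α₁) / (1 + α₀ + α₁) * ((α₀ + α₁) / (1 + α₀ + α₁) * (α₀ / (1 + α₀)) *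
        (α₀ / (1 + α₀) + 1 / (1 + α₀) * (α₁ / (1 + α₀ + α₁)) ^ (n - m - 1))) := by
  set D := {ω | X (m + 1) ω = 1} ∩ {ω | X m ω = 1}
  have hD : IsHistoryEvent X (m + 2) D :=
    (IsHistoryEvent.eq_of_lt (by omega) 1).inter (IsHistoryEvent.eq_of_lt (by omega) 1)
  have hp : 0 < 1 + α₀ := by linarith [h.pos₀]
  have hDn : μ.real (D ∩ {ω | X n ω = 1}) = μ.real D *
      (α₀ / (1 + α₀) + 1 / (1 + α₀) * (α₁ / (1 + α₀ + α₁)) ^ (n - m - 1)) := by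
    have hDD : D ∩ {ω | X (m + 1) ω = 1} = D := Set.inter_eq_left.2 Set.inter_subset_left
    have := h.measureReal_inter_eq_one_add hD (n - m - 1)
    rw [show m + 1 + (n - m - 1) = n by omega, hDD] at this
    rw [this]
    field_simp
    ring
  have hset : ({ω | X (n + 1) ω = 1} ∩ {ω | X n ω = 1}) ∩ D =
      D ∩ {ω | X n ω = 1} ∩ {ω | X (n + 1) ω = 1} := by
    ext ω
    simp only [Set.mem_inter_iff]
    tauto
  have hDn_hist : IsHistoryEvent X (n + 1) (D ∩ {ω | X n ω = 1}) :=
    (hD.mono (by omega)).inter (IsHistoryEvent.eq_of_lt n.lt_succ_self 1)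
  rw [hset, h.measureReal_inter_eq_one_succ hDn_hist, Set.inter_assoc D, Set.inter_self, hDn,
    h.measureReal_eq_one_inter_eq_one m]
  ring

theorem eq_indicator (t : ℕ) : X t = {ω | X t ω = 1}.indicator 1 := by
  funext ω
  rcases h.binary t ω with hω | hω <;> simp [hω]

theorem mul_eq_indicator_inter (t u : ℕ) :
    (fun ω => X t ω * X u ω) = ({ω | X t ω = 1} ∩ {ω | X u ω = 1}).indicator 1 := by
  rw [Set.inter_indicator_one, ← h.eq_indicator, ← h.eq_indicator]
  rfl

end TwoStateChain

/-- Lemma (part i): mean, variance and autocovariance of `X_t X_{t−1}` for the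
two-state stationary Markov chain. -/
theorem twoStateChain_prod_moments (Ω : Type) [MeasurableSpace Ω] (μ : Measure Ω)
    (α₀ α₁ : ℝ) (X : ℕ → Ω → ℝ) (hchain : TwoStateChain Ω μ α₀ α₁ X) :
    (∀ t : ℕ, 1 ≤ t →
      ((∫ ω, X t ω * X (t - 1) ω ∂μ) =
        α₀ * (α₀ + α₁) / ((1 + α₀) * (1 + α₀ + α₁)) ∧
      covQ μ (fun ω => X t ω * X (t - 1) ω) (fun ω => X t ω * X (t - 1) ω) =
        α₀ * (α₀ + α₁) * (2 * α₀ + α₁ + 1) / ((1 + α₀) ^ 2 * (1 + α₀ + α₁) ^ 2))) ∧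
    ∀ t s : ℕ, 1 ≤ t → 1 ≤ s → t ≠ s →
      covQ μ (fun ω => X t ω * X (t - 1) ω) (fun ω => X s ω * X (s - 1) ω) =
        (α₁ / (1 + α₀ + α₁)) ^ (((t : ℤ) - (s : ℤ)).natAbs - 1) *
          (α₀ * (α₀ + α₁) ^ 2 / ((1 + α₀) ^ 2 * (1 + α₀ + α₁) ^ 2)) := by
  have hp : 0 < 1 + α₀ := by linarith [hchain.pos₀]
  have hq : 0 < 1 + α₀ + α₁ := by linarith [hchain.pos₀, hchain.pos₁]
  have hprod (n : ℕ) : (fun ω => X (n + 1) ω * X (n + 1 - 1) ω) =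
      ({ω | X (n + 1) ω = 1} ∩ {ω | X n ω = 1}).indicator 1 :=
    hchain.mul_eq_indicator_inter (n + 1) n
  have hmeas (n : ℕ) : MeasurableSet ({ω | X (n + 1) ω = 1} ∩ {ω | X n ω = 1}) :=
    (hchain.measurableSet_eq _ 1).inter (hchain.measurableSet_eq n 1)
  refine ⟨fun t ht => ?_, fun t s ht hs hts => ?_⟩
  · obtain ⟨n, rfl⟩ : ∃ n, t = n + 1 := ⟨t - 1, by omega⟩
    rw [hprod, integral_indicator_one (hmeas n), covQ_indicator_one μ (hmeas n) (hmeas n),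
      Set.inter_self, hchain.measureReal_eq_one_inter_eq_one]
    constructor
    · field_simp
    · field_simp
      ring
  · wlog hst : s < t generalizing t s
    · rw [covQ_comm, this s t hs ht hts.symm (by omega), ← Int.natAbs_neg, neg_sub]
    obtain ⟨m, rfl⟩ : ∃ m, s = m + 1 := ⟨s - 1, by omega⟩
    obtain ⟨n, rfl⟩ : ∃ n, t = n + 1 := ⟨t - 1, by omega⟩
    rw [hprod, hprod, covQ_indicator_one μ (hmeas n) (hmeas m),
      hchain.measureReal_pair_inter_pair (by omega), hchain.measureReal_eq_one_inter_eq_one,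
      hchain.measureReal_eq_one_inter_eq_one,
      show (((n + 1 : ℕ) : ℤ) - ((m + 1 : ℕ) : ℤ)).natAbs - 1 = n - m - 1 by omega]
    field_simp
    ring
end

section
/- Let f : ℝ → ℝ be defined by f(x) = log(1 + e^x). Then for every integer k ≥ 1 and every x ∈ ℝ, the k-th derivative of f satisfies |f^{(k)}(x)| ≤ (k−1)!. -/
/-!
Since `f' = σ` is the logistic sigmoid and `σ' = σ (1 - σ)`, every derivative `σ⁽ᵐ⁾` is a
polynomial in `σ` and `1 - σ`. Differentiating a monomial `c σᵃ (1 - σ)ᵇ` gives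
`c a σᵃ (1 - σ)ᵇ⁺¹ - c b σᵃ⁺¹ (1 - σ)ᵇ`, so the total degree grows by one and the absolute sum of
the coefficients is multiplied by at most the degree. Starting from `σ` (degree `1`, mass `1`),
the coefficients of `σ⁽ᵐ⁾` have absolute sum at most `m!`, and each monomial lies in `[0, 1]`.
-/

open Real

/-- `g` is a polynomial in `s` and `1 - s` of total degree at most `n` whose coefficients have
absolute values summing to at most `M`. -/
inductive IsBoundedLogisticPoly (s : ℝ → ℝ) (n : ℕ) : ℝ → (ℝ → ℝ) → Prop
  | monomial {M : ℝ} (c : ℝ) (a b : ℕ) (hab : a + b ≤ n) (hc : |c| ≤ M) :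
      IsBoundedLogisticPoly s n M (fun x => c * s x ^ a * (1 - s x) ^ b)
  | add {M₁ M₂ M : ℝ} {g₁ g₂ : ℝ → ℝ} (h₁ : IsBoundedLogisticPoly s n M₁ g₁)
      (h₂ : IsBoundedLogisticPoly s n M₂ g₂) (hM : M₁ + M₂ ≤ M) :
      IsBoundedLogisticPoly s n M (g₁ + g₂)

section Logistic

variable {s : ℝ → ℝ}

theorem hasDerivAt_logistic_monomial {x : ℝ} (hs : HasDerivAt s (s x * (1 - s x)) x)
    (c : ℝ) (a b : ℕ) :
    HasDerivAt (fun y => c * s y ^ a * (1 - s y) ^ b)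
      (c * a * s x ^ a * (1 - s x) ^ (b + 1) + -(c * b) * s x ^ (a + 1) * (1 - s x) ^ b) x := by
  have h := ((hs.fun_pow a).fun_mul ((hs.const_sub 1).fun_pow b)).const_mul c
  simp only [← mul_assoc] at h
  refine h.congr_deriv ?_
  rcases a with _ | a <;> rcases b with _ | b <;>
    simp only [Nat.cast_zero, Nat.cast_succ, Nat.add_sub_cancel] <;> ring

theorem IsBoundedLogisticPoly.abs_le {n : ℕ} {M : ℝ} {g : ℝ → ℝ}
    (h : IsBoundedLogisticPoly s n M g) (hs : ∀ x, s x ∈ Set.Icc 0 1) (x : ℝ) : |g x| ≤ M := by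
  induction h with
  | monomial c a b _ hc =>
    obtain ⟨hs₀, hs₁⟩ := hs x
    have hmono : s x ^ a * (1 - s x) ^ b ≤ 1 :=
      mul_le_one₀ (pow_le_one₀ hs₀ hs₁) (by positivity) (pow_le_one₀ (by linarith) (by linarith))
    have hmono₀ : 0 ≤ s x ^ a * (1 - s x) ^ b := by have := sub_nonneg.2 hs₁; positivity
    calc |c * s x ^ a * (1 - s x) ^ b| = |c| * (s x ^ a * (1 - s x) ^ b) := by
          rw [mul_assoc, abs_mul, abs_of_nonneg hmono₀]
      _ ≤ |c| * 1 := by gcongr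
      _ ≤ _ := by linarith
  | add _ _ hM ih₁ ih₂ => exact (abs_add_le _ _).trans (by linarith)

theorem IsBoundedLogisticPoly.exists_hasDerivAt {n : ℕ} {M : ℝ} {g : ℝ → ℝ}
    (h : IsBoundedLogisticPoly s n M g) (hs : ∀ x, HasDerivAt s (s x * (1 - s x)) x) :
    ∃ g', (∀ x, HasDerivAt g (g' x) x) ∧ IsBoundedLogisticPoly s (n + 1) (n * M) g' := by
  induction h with
  | @monomial M c a b hab hc =>
    refine ⟨_, fun x => hasDerivAt_logistic_monomial (hs x) c a b,
      .add (.monomial _ _ _ (by omega) le_rfl) (.monomial _ _ _ (by omega) le_rfl) ?_⟩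
    have hab' : (a : ℝ) + b ≤ n := by exact_mod_cast hab
    have hM : 0 ≤ M := (abs_nonneg c).trans hc
    calc |c * a| + |-(c * b)| = |c| * (a + b) := by
          simp only [abs_neg, abs_mul, Nat.abs_cast]; ring
      _ ≤ M * n := by gcongr
      _ = n * M := mul_comm _ _
  | add _ _ hM ih₁ ih₂ =>
    obtain ⟨g₁', hg₁, h₁⟩ := ih₁
    obtain ⟨g₂', hg₂, h₂⟩ := ih₂
    exact ⟨g₁' + g₂', fun x => (hg₁ x).add (hg₂ x), .add h₁ h₂ (by rw [← mul_add]; gcongr)⟩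

theorem isBoundedLogisticPoly_iteratedDeriv (hs : ∀ x, HasDerivAt s (s x * (1 - s x)) x)
    (m : ℕ) : IsBoundedLogisticPoly s (m + 1) m.factorial (iteratedDeriv m s) := by
  induction m with
  | zero => simpa using IsBoundedLogisticPoly.monomial (s := s) 1 1 0 le_rfl le_rfl
  | succ m ih =>
    obtain ⟨g', hg', h⟩ := ih.exists_hasDerivAt hs
    rw [iteratedDeriv_succ, funext fun x => (hg' x).deriv, Nat.factorial_succ]
    simpa using h

theorem abs_iteratedDeriv_le_factorial (hs : ∀ x, HasDerivAt s (s x * (1 - s x)) x)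
    (hs_mem : ∀ x, s x ∈ Set.Icc 0 1) (m : ℕ) (x : ℝ) :
    |iteratedDeriv m s x| ≤ m.factorial :=
  (isBoundedLogisticPoly_iteratedDeriv hs m).abs_le hs_mem x

end Logistic

theorem deriv_log_one_add_exp : deriv (fun y : ℝ => log (1 + exp y)) = sigmoid := by
  funext x
  have hpos : 0 < 1 + exp x := by positivity
  rw [(((hasDerivAt_exp x).const_add 1).log hpos.ne').deriv, sigmoid_def, exp_neg]
  field_simp
  ring

/-- The `k`-th derivative of `x ↦ log(1 + eˣ)` is bounded by `(k−1)!` for `k ≥ 1`. -/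
theorem iteratedDeriv_log_one_add_exp_le (k : ℕ) (hk : 1 ≤ k) (x : ℝ) :
    |iteratedDeriv k (fun y : ℝ => log (1 + exp y)) x| ≤ (Nat.factorial (k - 1) : ℝ) := by
  obtain ⟨m, rfl⟩ : ∃ m, k = m + 1 := ⟨k - 1, by omega⟩
  rw [iteratedDeriv_succ', deriv_log_one_add_exp, Nat.add_sub_cancel]
  exact abs_iteratedDeriv_le_factorial hasDerivAt_sigmoid
    (fun y => ⟨sigmoid_nonneg y, sigmoid_le_one y⟩) m x
end
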